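/- arXiv:2312.04039 — 2 statements merged into one kernel-verified Lean document; each statement's English description precedes it below -/
import Mathlib

section
/- Let n ≥ 6, let V = {0,1,…,n−1} with the natural order, and let Q be a partial quasi-pairing of V such that X := ∪Q is a transversal of mc(underline(n)) and Q is an irreducible quasi-pairing of X. Let M be a nontrivial module of T := Inv(underline(n), Q), and write m^- := min(M), m^+ := max(M). Then at most 2 elements of V ∖ M lie in the closed interval [m^-, m^+]. -/
open Set

/-- The arc relation of the tournament `Inv(underline(V), P)` obtained from the
transitive tournament on a linearly ordered type by reversing the arcs `(x,y)`
with `{x,y} ∈ P`. -/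
def InvArc {α : Type*} [LinearOrder α] (P : Set (Set α)) (x y : α) : Prop :=
  (x < y ∧ ({x, y} : Set α) ∉ P) ∨ (y < x ∧ ({x, y} : Set α) ∈ P)

/-- `M` is a module of the subtournament of `Inv(·, P)` induced on the vertex set `W`. -/
def IsModuleOn {α : Type*} [LinearOrder α] (P : Set (Set α)) (W M : Set α) : Prop :=
  M ⊆ W ∧ ∀ v ∈ W, v ∉ M →
    (∀ x ∈ M, InvArc P v x) ∨ (∀ x ∈ M, InvArc P x v)

/-- A subset of the vertex set `W` is trivial if it is empty, a singleton, or all of `W`. -/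
def IsTrivialSubset {α : Type*} (W M : Set α) : Prop :=
  M = ∅ ∨ (∃ a, M = {a}) ∨ M = W

/-- A nontrivial module of the tournament `Inv(·, P)` induced on `W`. -/
def IsNontrivialModuleOn {α : Type*} [LinearOrder α] (P : Set (Set α)) (W M : Set α) : Prop :=
  IsModuleOn P W M ∧ ¬ IsTrivialSubset W M

/-- The tournament `Inv(·, P)` induced on `W` is indecomposable: all its modules are trivial. -/
def IndecomposableOn {α : Type*} [LinearOrder α] (P : Set (Set α)) (W : Set α) : Prop :=
  ∀ M : Set α, IsModuleOn P W M → IsTrivialSubset W M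

/-- The tournament `Inv(·, P)` induced on `W` is decomposable: it has a nontrivial module. -/
def DecomposableOn {α : Type*} [LinearOrder α] (P : Set (Set α)) (W : Set α) : Prop :=
  ∃ M : Set α, IsNontrivialModuleOn P W M

/-- A co-module of the tournament `Inv(·, P)` on `W`: a subset `M` of `W` such that
`M` or `W ∖ M` is a nontrivial module. -/
def IsCoModuleOn {α : Type*} [LinearOrder α] (P : Set (Set α)) (W M : Set α) : Prop :=
  M ⊆ W ∧ (IsNontrivialModuleOn P W M ∨ IsNontrivialModuleOn P W (W \ M))

/-- `mc(underline(W))`: the family of minimal co-modules of the transitive tournament on `W`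
(a minimal co-module contains no other co-module). -/
def mcOn {α : Type*} [LinearOrder α] (W : Set α) : Set (Set α) :=
  {M | IsCoModuleOn (∅ : Set (Set α)) W M ∧
    ∀ C : Set α, IsCoModuleOn (∅ : Set (Set α)) W C → C ⊆ M → C = M}

/-- `S` is a transversal of the family `F`: it meets every member of `F`. -/
def TransversalOf {α : Type*} (S : Set α) (F : Set (Set α)) : Prop :=
  ∀ C ∈ F, (S ∩ C).Nonempty

/-- A partial pairing of `V`: a set of pairwise disjoint 2-element subsets of `V`. -/
def IsPartialPairingOn {α : Type*} (V : Set α) (P : Set (Set α)) : Prop :=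
  (∀ B ∈ P, B ⊆ V ∧ B.ncard = 2) ∧
  ∀ B ∈ P, ∀ C ∈ P, B ≠ C → Disjoint B C

/-- `I` is an interval of the totally ordered set `X`: every element of `X ∖ I` is greater
than all elements of `I` or smaller than all of them. -/
def IsIntervalOf {α : Type*} [LinearOrder α] (X I : Set α) : Prop :=
  I ⊆ X ∧ ∀ v ∈ X \ I, (∀ i ∈ I, v < i) ∨ (∀ i ∈ I, i < v)

/-- A nontrivial interval of `X`. -/
def IsNontrivialIntervalOf {α : Type*} [LinearOrder α] (X I : Set α) : Prop :=
  IsIntervalOf X I ∧ ¬ IsTrivialSubset X I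

/-- A family of blocks `P` on the totally ordered set `X` is irreducible if no nontrivial
interval of `X` is a union of blocks of `P`. -/
def IrreducibleOn {α : Type*} [LinearOrder α] (X : Set α) (P : Set (Set α)) : Prop :=
  ∀ R ⊆ P, ¬ IsNontrivialIntervalOf X (⋃₀ R)

/-- A partial quasi-pairing of `V`: a set `Q` of `m+1` two-element subsets of `V` (`m ≥ 1`)
whose union has size `2m+1`. -/
def IsPartialQuasiPairingOn {α : Type*} (V : Set α) (Q : Set (Set α)) : Prop :=
  (∀ B ∈ Q, B ⊆ V ∧ B.ncard = 2) ∧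
  ∃ m : ℕ, 1 ≤ m ∧ (⋃₀ Q).ncard = 2 * m + 1 ∧ Q.ncard = m + 1

/-- The distinguished data of a quasi-pairing `Q`: `vh = v̂_Q` is the element lying in the two
blocks `{vh, vm}` and `{vh, vp}` of `Q`, with `vm = v_Q^- < v_Q^+ = vp`. -/
def QPData {α : Type*} [LinearOrder α] (Q : Set (Set α)) (vh vm vp : α) : Prop :=
  ({vh, vm} : Set α) ∈ Q ∧ ({vh, vp} : Set α) ∈ Q ∧ vm < vp

/-- `Q_part`: the partition of `⋃₀ Q` obtained from `Q` by merging its two intersecting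
blocks into `B_Q = {v̂_Q, v_Q^-, v_Q^+}`. -/
def QPart {α : Type*} [LinearOrder α] (Q : Set (Set α)) (vh vm vp : α) : Set (Set α) :=
  (Q \ {({vh, vm} : Set α), ({vh, vp} : Set α)}) ∪ {({vh, vm, vp} : Set α)}

/-! Every vertex of `V ∖ M` strictly between `m⁻` and `m⁺` must be reversed against `m⁻` or
against `m⁺` to relate uniformly to `M`, while the counting conditions on a quasi-pairing say
that `v̂_Q` is the only vertex with two partners. Three such vertices therefore force
`v̂_Q ∈ {m⁻, m⁺}`, say `v̂_Q = m⁻`, and then they are `v_Q^-`, `v_Q^+` and the partner `u` of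
`m⁺`. The set `⋃Q ∩ [m⁻, m⁺]` is closed under partners, hence a union of blocks of `Q_part`, so
irreducibility gives `⋃Q ⊆ [m⁻, m⁺]`; as `⋃Q` contains `0` and `n - 1`, `M ∪ {v_Q^-, v_Q^+, u}`
is all of `V`. Now `v_Q^+ → M` leaves no vertex of `M` in `(m⁻, v_Q^+)` and `M → u` none in
`(u, m⁺)`. If `u < v_Q^+` this gives `M = {m⁻, m⁺}` and `n ≤ 5`; otherwise `B_Q` is a nontrivial
interval of `⋃Q`. The case `v̂_Q = m⁺` is the order dual. -/

section Counting

variable {α : Type*}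

theorem ncard_sUnion_le_mul {F : Set (Set α)} (hF : F.Finite) {k : ℕ}
    (hk : ∀ B ∈ F, B.ncard ≤ k) : (⋃₀ F).ncard ≤ k * F.ncard := by
  induction F, hF using Set.Finite.induction_on with
  | empty => simp
  | @insert B F hBF hF ih =>
    rw [sUnion_insert, ncard_insert_of_notMem hBF hF]
    calc (B ∪ ⋃₀ F).ncard ≤ B.ncard + (⋃₀ F).ncard := ncard_union_le _ _
      _ ≤ k + k * F.ncard :=
        add_le_add (hk B (mem_insert _ _)) (ih fun C hC => hk C (mem_insert_of_mem _ hC))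
      _ = k * (F.ncard + 1) := by ring

theorem pairwiseDisjoint_of_mul_le_ncard_sUnion {F : Set (Set α)} (hF : F.Finite) {k : ℕ}
    (hfin : ∀ B ∈ F, B.Finite) (hk : ∀ B ∈ F, B.ncard ≤ k)
    (h : k * F.ncard ≤ (⋃₀ F).ncard) : F.PairwiseDisjoint id := by
  intro B hB C hC hBC
  refine disjoint_left.2 fun x (hxB : x ∈ B) (hxC : x ∈ C) => ?_
  have hcover : ⋃₀ F ⊆ ⋃₀ (F \ {B}) ∪ (B \ {x}) := by
    rintro y ⟨D, hD, hyD⟩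
    by_cases hDB : D = B
    · subst hDB
      by_cases hyx : y = x
      · exact Or.inl ⟨C, ⟨hC, fun h => hBC h.symm⟩, hyx ▸ hxC⟩
      · exact Or.inr ⟨hyD, hyx⟩
    · exact Or.inl ⟨D, ⟨hD, hDB⟩, hyD⟩
  have hrest := ncard_sUnion_le_mul (hF.sdiff (t := {B})) fun D hD => hk D hD.1
  have hcard := (ncard_le_ncard hcover (((hF.sdiff (t := {B})).sUnion fun D hD => hfin D hD.1).union
    ((hfin B hB).sdiff))).trans (ncard_union_le _ _)
  rw [ncard_sdiff_singleton_of_mem hB, Nat.mul_sub_one] at hrest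
  rw [ncard_sdiff_singleton_of_mem hxB] at hcard
  have hB0 : 0 < B.ncard := (ncard_pos (hfin B hB)).2 ⟨x, hxB⟩
  have hF0 : k ≤ k * F.ncard := Nat.le_mul_of_pos_right k ((ncard_pos hF).2 ⟨B, hB⟩)
  have := hk B hB
  omega

end Counting

section QuasiPairing

variable {α : Type*}

theorem pair_eq_pair_left_iff {a s t : α} : ({a, s} : Set α) = {a, t} ↔ s = t := by
  refine ⟨fun h => ?_, fun h => h ▸ rfl⟩
  rcases pair_eq_pair_iff.1 h with ⟨-, h⟩ | ⟨h₁, h₂⟩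
  exacts [h, h₂.trans h₁]

/-- The shape of a quasi-pairing with `v̂_Q = vh` and `{v_Q^-, v_Q^+} = {vm, vp}`: only `vh`
lies in two blocks. -/
structure IsQuasiPairingAt (Q : Set (Set α)) (vh vm vp : α) : Prop where
  pair_mem_left : ({vh, vm} : Set α) ∈ Q
  pair_mem_right : ({vh, vp} : Set α) ∈ Q
  exists_eq_pair : ∀ B ∈ Q, ∀ x ∈ B, ∃ y, B = {x, y}
  eq_of_pair_mem : ∀ {x y z : α}, ({x, y} : Set α) ∈ Q → ({x, z} : Set α) ∈ Q → x ≠ vh → y = z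
  eq_or_eq_of_pair_mem : ∀ {y : α}, ({vh, y} : Set α) ∈ Q → y = vm ∨ y = vp

theorem IsQuasiPairingAt.swap {Q : Set (Set α)} {vh vm vp : α} (hQ : IsQuasiPairingAt Q vh vm vp) :
    IsQuasiPairingAt Q vh vp vm :=
  ⟨hQ.pair_mem_right, hQ.pair_mem_left, hQ.exists_eq_pair, hQ.eq_of_pair_mem,
    fun h => (hQ.eq_or_eq_of_pair_mem h).symm⟩

/-- Removing one of the two blocks through the doubled vertex leaves `m` blocks covering at
least `2m` points, so they are disjoint. -/
theorem IsPartialQuasiPairingOn.pairwiseDisjoint_sdiff {V : Set α} {Q : Set (Set α)}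
    (hQ : IsPartialQuasiPairingOn V Q) {a w w' : α} (hw : ({a, w} : Set α) ∈ Q)
    (hw' : ({a, w'} : Set α) ∈ Q) (hne : w ≠ w') : (Q \ {{a, w}}).PairwiseDisjoint id := by
  have hw'Q : ({a, w'} : Set α) ∈ Q \ {{a, w}} :=
    ⟨hw', fun h => hne (pair_eq_pair_left_iff.1 h).symm⟩
  obtain ⟨hpair, m, -, hX, hQm⟩ := hQ
  have hQfin : Q.Finite := finite_of_ncard_pos (by omega)
  have hfin : ∀ B ∈ Q, B.Finite := fun B hB => finite_of_ncard_pos (by rw [(hpair B hB).2]; omega)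
  have hcover : ⋃₀ Q ⊆ ⋃₀ (Q \ {{a, w}}) ∪ {w} := by
    rintro x ⟨B, hB, hxB⟩
    by_cases hBw : B = {a, w}
    · subst hBw
      rcases hxB with rfl | rfl
      · exact Or.inl ⟨_, hw'Q, mem_insert _ _⟩
      · exact Or.inr rfl
    · exact Or.inl ⟨B, ⟨hB, hBw⟩, hxB⟩
  have hcard := (ncard_le_ncard hcover (((hQfin.sdiff (t := {{a, w}})).sUnion
    fun B hB => hfin B hB.1).union (finite_singleton w))).trans (ncard_union_le _ _)
  rw [ncard_singleton, hX] at hcard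
  refine pairwiseDisjoint_of_mul_le_ncard_sUnion (k := 2) hQfin.sdiff (fun B hB => hfin B hB.1)
    (fun B hB => (hpair B hB.1).2.le) ?_
  rw [ncard_sdiff_singleton_of_mem hw]
  omega

theorem IsPartialQuasiPairingOn.isQuasiPairingAt [LinearOrder α] {V : Set α} {Q : Set (Set α)}
    (hQ : IsPartialQuasiPairingOn V Q) {vh vm vp : α} (hd : QPData Q vh vm vp) :
    IsQuasiPairingAt Q vh vm vp := by
  obtain ⟨hm, hp, hmp⟩ := hd
  have hdm := hQ.pairwiseDisjoint_sdiff hm hp hmp.ne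
  have hdp := hQ.pairwiseDisjoint_sdiff hp hm hmp.ne'
  refine ⟨hm, hp, fun B hB x hx => ?_, fun {x y z} hy hz hx => ?_, fun {y} hy => ?_⟩
  · obtain ⟨a, b, -, rfl⟩ := ncard_eq_two.1 (hQ.1 B hB).2
    rcases hx with rfl | rfl
    exacts [⟨b, rfl⟩, ⟨a, pair_comm _ _⟩]
  · have key : ∀ w, (Q \ {{vh, w}}).PairwiseDisjoint id → x ∉ ({vh, w} : Set α) → y = z := by
      intro w hd hxw
      have hne : ∀ {t}, ({x, t} : Set α) ≠ {vh, w} := fun h => hxw (h ▸ mem_insert _ _)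
      exact pair_eq_pair_left_iff.1
        (hd.elim_set ⟨hy, hne⟩ ⟨hz, hne⟩ x (mem_insert _ _) (mem_insert _ _))
    by_cases hxm : x ∈ ({vh, vm} : Set α)
    · refine key vp hdp ?_
      rintro (h | rfl)
      · exact hx h
      · rcases hxm with h | h
        exacts [hx h, hmp.ne h.symm]
    · exact key vm hdm hxm
  · by_contra! h
    have hne : ∀ {t}, y ≠ t → ({vh, y} : Set α) ≠ {vh, t} := fun h' h'' =>
      h' (pair_eq_pair_left_iff.1 h'')
    exact hne h.1 (hdp.elim_set ⟨hy, hne h.2⟩ ⟨hm, fun h' => hmp.ne (pair_eq_pair_left_iff.1 h')⟩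
      vh (mem_insert _ _) (mem_insert _ _))

end QuasiPairing

section Modules

variable {α : Type*} [LinearOrder α] {P : Set (Set α)} {W M : Set α}

theorem invArc_iff {x y : α} (h : x ≠ y) : InvArc P x y ↔ (({x, y} : Set α) ∈ P ↔ y < x) := by
  rcases h.lt_or_gt with h | h <;> simp [InvArc, h, h.not_gt]

theorem invArc_empty {x y : α} : InvArc ∅ x y ↔ x < y := by
  simp [InvArc]

theorem IsModuleOn.pair_mem_iff_or (hM : IsModuleOn P W M) {v : α} (hv : v ∈ W) (hvM : v ∉ M) :
    (∀ x ∈ M, ({v, x} : Set α) ∈ P ↔ x < v) ∨ (∀ x ∈ M, ({v, x} : Set α) ∈ P ↔ v < x) := by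
  have hne : ∀ x ∈ M, v ≠ x := fun x hx h => hvM (h ▸ hx)
  refine (hM.2 v hv hvM).imp (fun h x hx => (invArc_iff (hne x hx)).1 (h x hx)) fun h x hx => ?_
  rw [pair_comm]
  exact (invArc_iff (hne x hx).symm).1 (h x hx)

theorem IsModuleOn.pair_mem_of_pair_mem (hM : IsModuleOn P W M) {v x y : α} (hv : v ∈ W)
    (hvM : v ∉ M) (hx : x ∈ M) (hy : y ∈ M) (hxy : x < v ↔ y < v)
    (hvx : ({v, x} : Set α) ∈ P) : ({v, y} : Set α) ∈ P := by
  have hny : y ≠ v := fun h => hvM (h ▸ hy)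
  rcases hM.pair_mem_iff_or hv hvM with h | h
  · exact (h y hy).2 (hxy.1 ((h x hx).1 hvx))
  · have hvx' := (h x hx).1 hvx
    exact (h y hy).2 (lt_of_le_of_ne (not_lt.1 fun hyv => lt_asymm (hxy.2 hyv) hvx') hny.symm)

theorem IsModuleOn.pair_mem_or_pair_mem (hM : IsModuleOn P W M) {a b v : α} (ha : IsLeast M a)
    (hb : IsGreatest M b) (hv : v ∈ (W \ M) ∩ Icc a b) :
    ({a, v} : Set α) ∈ P ∨ ({b, v} : Set α) ∈ P := by
  obtain ⟨⟨hvW, hvM⟩, hav, hvb⟩ := hv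
  have hav : a < v := lt_of_le_of_ne hav fun h => hvM (h ▸ ha.1)
  have hvb : v < b := lt_of_le_of_ne hvb fun h => hvM (h ▸ hb.1)
  rw [pair_comm a, pair_comm b]
  exact (hM.pair_mem_iff_or hvW hvM).imp (fun h => (h a ha.1).2 hav) fun h => (h b hb.1).2 hvb

theorem singleton_mem_mcOn {a : α} (ha : a ∈ W) (hext : (∀ w ∈ W, a ≤ w) ∨ ∀ w ∈ W, w ≤ a)
    (hW : (W \ {a}).Nontrivial) : {a} ∈ mcOn W := by
  have hco : IsCoModuleOn ∅ W {a} := by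
    refine ⟨singleton_subset_iff.2 ha, Or.inr ⟨⟨sdiff_subset, fun v hv hvM => ?_⟩, ?_⟩⟩
    · obtain rfl : v = a := by simpa [hv] using hvM
      refine hext.imp (fun h x hx => ?_) fun h x hx => ?_ <;> rw [invArc_empty]
      · exact lt_of_le_of_ne (h x hx.1) (Ne.symm hx.2)
      · exact lt_of_le_of_ne (h x hx.1) hx.2
    · rintro (h | ⟨b, hb⟩ | h)
      · exact hW.nonempty.ne_empty h
      · exact hW.ne_singleton hb
      · exact (h.symm ▸ ha : a ∈ W \ {a}).2 rfl
  refine ⟨hco, fun C hC hCa => ?_⟩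
  rcases subset_singleton_iff_eq.1 hCa with rfl | rfl
  · rcases hC.2 with h | h
    · exact absurd (Or.inl rfl) h.2
    · exact absurd (Or.inr (Or.inr sdiff_empty)) h.2
  · rfl

end Modules

section Duality

variable {α : Type*} [LinearOrder α]

theorem invArc_toDual (P : Set (Set α)) (x y : α) :
    InvArc (α := αᵒᵈ) P x y ↔ InvArc P y x := by
  unfold InvArc
  rw [pair_comm]
  rfl

theorem isModuleOn_toDual {P : Set (Set α)} {W M : Set α} :
    IsModuleOn (α := αᵒᵈ) P W M ↔ IsModuleOn P W M := by
  refine and_congr_right fun _ => forall₂_congr fun v _ => forall_congr' fun _ => ?_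
  rw [or_comm]
  exact or_congr (forall₂_congr fun x _ => invArc_toDual P x v)
    (forall₂_congr fun x _ => invArc_toDual P v x)

theorem isIntervalOf_toDual {X I : Set α} :
    IsIntervalOf (α := αᵒᵈ) X I ↔ IsIntervalOf X I :=
  and_congr_right fun _ => forall₂_congr fun _ _ => or_comm

theorem irreducibleOn_toDual {X : Set α} {P : Set (Set α)} :
    IrreducibleOn (α := αᵒᵈ) X P ↔ IrreducibleOn X P :=
  forall₂_congr fun _ _ => not_congr (and_congr_left' isIntervalOf_toDual)

theorem qPart_comm (Q : Set (Set α)) (a b c : α) : QPart Q a b c = QPart Q a c b := by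
  rw [QPart, QPart, pair_comm ({a, b} : Set α), pair_comm b c]

end Duality

section Irreducible

variable {α : Type*} [LinearOrder α]

theorem isIntervalOf_inter_Icc (X : Set α) (a b : α) : IsIntervalOf X (X ∩ Icc a b) := by
  refine ⟨inter_subset_left, fun v hv => ?_⟩
  rcases not_and_or.1 fun h => hv.2 ⟨hv.1, h⟩ with h | h
  · exact Or.inl fun i hi => (not_le.1 h).trans_le hi.2.1
  · exact Or.inr fun i hi => hi.2.2.trans_lt (not_le.1 h)

theorem IrreducibleOn.sUnion_eq {X : Set α} {P R : Set (Set α)} (hirr : IrreducibleOn X P)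
    (hR : R ⊆ P) (hint : IsIntervalOf X (⋃₀ R)) {x y : α} (hx : x ∈ ⋃₀ R) (hy : y ∈ ⋃₀ R)
    (hxy : x ≠ y) : ⋃₀ R = X := by
  by_contra hne
  refine hirr R hR ⟨hint, ?_⟩
  rintro (h | ⟨a, h⟩ | h)
  · exact (h ▸ hx : x ∈ (∅ : Set α))
  · rw [h] at hx hy
    exact hxy (hx.trans hy.symm)
  · exact hne h

theorem exists_subset_qPart_sUnion_eq {Q : Set (Set α)} {vh vm vp : α}
    (hm : ({vh, vm} : Set α) ∈ Q) (hp : ({vh, vp} : Set α) ∈ Q) {I : Set α} (hI : I ⊆ ⋃₀ Q)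
    (hclosed : ∀ B ∈ Q, (B ∩ I).Nonempty → B ⊆ I) : ∃ R ⊆ QPart Q vh vm vp, ⋃₀ R = I := by
  refine ⟨{B ∈ QPart Q vh vm vp | B ⊆ I}, sep_subset _ _,
    subset_antisymm (sUnion_subset fun B hB => hB.2) fun x hx => ?_⟩
  obtain ⟨B, hB, hxB⟩ := hI hx
  have hBI := hclosed B hB ⟨x, hxB, hx⟩
  by_cases hBv : B ∈ ({{vh, vm}, {vh, vp}} : Set (Set α))
  · have hvh : vh ∈ I := by rcases hBv with rfl | rfl <;> exact hBI (mem_insert _ _)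
    have hmI := hclosed _ hm ⟨vh, mem_insert _ _, hvh⟩
    have hpI := hclosed _ hp ⟨vh, mem_insert _ _, hvh⟩
    refine ⟨{vh, vm, vp}, ⟨Or.inr rfl, ?_⟩, ?_⟩
    · simp only [insert_subset_iff, singleton_subset_iff] at hmI hpI ⊢
      exact ⟨hvh, hmI.2, hpI.2⟩
    · rcases hBv with rfl | rfl <;> rcases hxB with rfl | rfl <;> simp
  · exact ⟨B, ⟨Or.inl ⟨hB, hBv⟩, hBI⟩, hxB⟩

end Irreducible

section Core

variable {α : Type*} [LinearOrder α] {Q : Set (Set α)} {W M : Set α} {vh vm vp a b : α}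

theorem IsQuasiPairingAt.eq_or_eq_of_two_lt_ncard (hQ : IsQuasiPairingAt Q vh vm vp)
    (hM : IsModuleOn Q W M) (ha : IsLeast M a) (hb : IsGreatest M b)
    (hG : 2 < ((W \ M) ∩ Icc a b).ncard) : vh = a ∨ vh = b := by
  by_contra! h
  have hsub : (W \ M) ∩ Icc a b ⊆ {g | ({a, g} : Set α) ∈ Q} ∪ {g | ({b, g} : Set α) ∈ Q} :=
    fun g hg => hM.pair_mem_or_pair_mem ha hb hg
  have ha1 : {g | ({a, g} : Set α) ∈ Q}.Subsingleton := fun y hy z hz =>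
    hQ.eq_of_pair_mem hy hz (Ne.symm h.1)
  have hb1 : {g | ({b, g} : Set α) ∈ Q}.Subsingleton := fun y hy z hz =>
    hQ.eq_of_pair_mem hy hz (Ne.symm h.2)
  have := (ncard_le_ncard hsub (ha1.finite.union hb1.finite)).trans (ncard_union_le _ _)
  have := (ncard_le_one_iff ha1.finite).2 fun hx hy => ha1 hx hy
  have := (ncard_le_one_iff hb1.finite).2 fun hx hy => hb1 hx hy
  omega

theorem IsQuasiPairingAt.exists_eq_insert_of_two_lt_ncard (hQ : IsQuasiPairingAt Q vh vm vp)
    (hM : IsModuleOn Q W M) (hvh : IsLeast M vh) (hb : IsGreatest M b)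
    (hG : 2 < ((W \ M) ∩ Icc vh b).ncard) :
    ∃ u, ({b, u} : Set α) ∈ Q ∧ u ≠ vp ∧ (W \ M) ∩ Icc vh b = {vm, vp, u} := by
  have h2 : ({vm, vp} : Set α).ncard ≤ 2 := by
    have := ncard_insert_le vm {vp}
    rwa [ncard_singleton] at this
  obtain ⟨u, huG, hu⟩ := exists_mem_notMem_of_ncard_lt_ncard (h2.trans_lt hG)
  have hpartner : ∀ g ∈ (W \ M) ∩ Icc vh b, g = vm ∨ g = vp ∨ ({b, g} : Set α) ∈ Q :=
    fun g hg => or_assoc.1 ((hM.pair_mem_or_pair_mem hvh hb hg).imp_left hQ.eq_or_eq_of_pair_mem)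
  have hub : ({b, u} : Set α) ∈ Q := (or_assoc.2 (hpartner u huG)).resolve_left hu
  have hbvh : b ≠ vh := by
    rintro rfl
    exact huG.1.2 (le_antisymm huG.2.2 huG.2.1 ▸ hb.1)
  refine ⟨u, hub, fun h => hu (Or.inr h), eq_of_subset_of_ncard_le (fun g hg => ?_) ?_⟩
  · rcases hpartner g hg with h | h | h
    · exact Or.inl h
    · exact Or.inr (Or.inl h)
    · exact Or.inr (Or.inr (hQ.eq_of_pair_mem h hub hbvh))
  · have := ncard_insert_le vm {vp, u}
    have := ncard_insert_le vp {u}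
    rw [ncard_singleton] at this
    omega

theorem IsQuasiPairingAt.eq_of_pair_mem_of_lt_iff (hQ : IsQuasiPairingAt Q vh vm vp)
    (hM : IsModuleOn Q W M) {v p x : α} (hv : v ∈ W) (hvM : v ∉ M) (hvh : v ≠ vh) (hp : p ∈ M)
    (hvp : ({v, p} : Set α) ∈ Q) (hx : x ∈ M) (hxp : x < v ↔ p < v) : x = p :=
  hQ.eq_of_pair_mem (hM.pair_mem_of_pair_mem hv hvM hp hx hxp.symm hvp) hvp hvh

theorem IsQuasiPairingAt.sUnion_subset_Icc (hQ : IsQuasiPairingAt Q vh vm vp)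
    (hXW : ⋃₀ Q ⊆ W) (hirr : IrreducibleOn (⋃₀ Q) (QPart Q vh vm vp)) (hM : IsModuleOn Q W M)
    (ha : IsLeast M a) (hb : IsGreatest M b) (hvh : vh ∈ M) (hvm : vm ∈ (W \ M) ∩ Icc a b) :
    ⋃₀ Q ⊆ Icc a b := by
  have hab : a < b := (lt_of_le_of_ne hvm.2.1 fun h => hvm.1.2 (h ▸ ha.1)).trans_le hvm.2.2
  have hMI : M ⊆ Icc a b := fun x hx => ⟨ha.2 hx, hb.2 hx⟩
  have hpartner : ∀ x y, ({x, y} : Set α) ∈ Q → x ∈ Icc a b → y ∈ Icc a b := by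
    intro x y hxy hx
    have hxW : x ∈ W := hXW ⟨_, hxy, mem_insert _ _⟩
    have hyW : y ∈ W := hXW ⟨_, hxy, mem_insert_of_mem _ rfl⟩
    by_cases hxM : x ∈ M
    · -- a partner of `M` outside `[a, b]` would be a partner of both `a` and `b`
      by_contra hy
      have hyM : y ∉ M := fun h => hy (hMI h)
      have hside : ∀ m ∈ M, m < y ↔ b < y := fun m hm =>
        ⟨fun h => not_le.1 fun hyb => hy ⟨(ha.2 hm).trans h.le, hyb⟩,
          fun h => (hb.2 hm).trans_lt h⟩
      have hyx : ({y, x} : Set α) ∈ Q := pair_comm x y ▸ hxy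
      have hyvh : y ≠ vh := fun h => hyM (h ▸ hvh)
      exact hab.ne ((hQ.eq_of_pair_mem_of_lt_iff hM hyW hyM hyvh hxM hyx ha.1
        ((hside a ha.1).trans (hside x hxM).symm)).trans (hQ.eq_of_pair_mem_of_lt_iff hM hyW hyM
        hyvh hxM hyx hb.1 ((hside b hb.1).trans (hside x hxM).symm)).symm)
    · have hxvh : x ≠ vh := fun h => hxM (h ▸ hvh)
      rcases hM.pair_mem_or_pair_mem ha hb ⟨⟨hxW, hxM⟩, hx⟩ with h | h
      · rw [hQ.eq_of_pair_mem hxy (pair_comm a x ▸ h) hxvh]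
        exact ⟨le_rfl, hab.le⟩
      · rw [hQ.eq_of_pair_mem hxy (pair_comm b x ▸ h) hxvh]
        exact ⟨hab.le, le_rfl⟩
  obtain ⟨R, hR, hRI⟩ := exists_subset_qPart_sUnion_eq hQ.pair_mem_left hQ.pair_mem_right
    (inter_subset_left (t := Icc a b)) fun B hB ⟨x, hxB, hxI⟩ => by
      obtain ⟨y, rfl⟩ := hQ.exists_eq_pair B hB x hxB
      exact pair_subset hxI ⟨⟨_, hB, mem_insert_of_mem _ rfl⟩, hpartner x y hB hxI.2⟩
  have hX := hirr.sUnion_eq hR (hRI ▸ isIntervalOf_inter_Icc _ a b)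
    (hRI ▸ ⟨⟨_, hQ.pair_mem_left, mem_insert _ _⟩, hMI hvh⟩ : vh ∈ ⋃₀ R)
    (hRI ▸ ⟨⟨_, hQ.pair_mem_left, mem_insert_of_mem _ rfl⟩, hvm.2⟩ : vm ∈ ⋃₀ R)
    fun h => hvm.1.2 (h ▸ hvh)
  rw [← hX, hRI]
  exact inter_subset_right

theorem IsQuasiPairingAt.exists_mem_Ioo_of_irreducibleOn (hQ : IsQuasiPairingAt Q vh vm vp)
    (hirr : IrreducibleOn (⋃₀ Q) (QPart Q vh vm vp)) (hvm : vh < vm) (hmp : vm < vp)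
    (hX : ⋃₀ Q ⊆ Ici vh) {w : α} (hw : w ∈ ⋃₀ Q) (hpw : vp < w) :
    ∃ v ∈ ⋃₀ Q, v ∈ Ioo vh vp ∧ v ≠ vm := by
  by_contra! hgap
  have hint : IsIntervalOf (⋃₀ Q) {vh, vm, vp} := by
    refine ⟨?_, fun v hv => Or.inr ?_⟩
    · simp only [insert_subset_iff, singleton_subset_iff]
      exact ⟨⟨_, hQ.pair_mem_left, mem_insert _ _⟩,
        ⟨_, hQ.pair_mem_left, mem_insert_of_mem _ rfl⟩,
        ⟨_, hQ.pair_mem_right, mem_insert_of_mem _ rfl⟩⟩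
    simp only [mem_sdiff, mem_insert_iff, mem_singleton_iff, not_or] at hv
    have hvp : vp < v := lt_of_not_ge fun h => hv.2.2.1 (hgap v hv.1
      ⟨lt_of_le_of_ne (hX hv.1) (Ne.symm hv.2.1), lt_of_le_of_ne h hv.2.2.2⟩)
    rintro i (rfl | rfl | rfl)
    exacts [(hvm.trans hmp).trans hvp, hmp.trans hvp, hvp]
  have hB := hirr.sUnion_eq (singleton_subset_iff.2 (Or.inr rfl))
    (by rwa [sUnion_singleton]) (by simp) (by simp) hvm.ne
  rw [sUnion_singleton] at hB
  rw [← hB] at hw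
  rcases hw with rfl | rfl | rfl
  exacts [lt_irrefl _ ((hvm.trans hmp).trans hpw), lt_irrefl _ (hmp.trans hpw), lt_irrefl _ hpw]

theorem IsQuasiPairingAt.false_of_isLeast_of_two_lt_ncard (hQ : IsQuasiPairingAt Q vh vm vp)
    (hmp : vm < vp) (hXW : ⋃₀ Q ⊆ W) (hirr : IrreducibleOn (⋃₀ Q) (QPart Q vh vm vp))
    (hbot : a ∈ ⋃₀ Q) (htop : b ∈ ⋃₀ Q) (hW : W ⊆ Icc a b) (hcard : 5 < W.ncard)
    {mhi : α} (hM : IsModuleOn Q W M) (hvh : IsLeast M vh) (hhi : IsGreatest M mhi)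
    (hG : 2 < ((W \ M) ∩ Icc vh mhi).ncard) : False := by
  obtain ⟨u, hu, hup, hGeq⟩ := hQ.exists_eq_insert_of_two_lt_ncard hM hvh hhi hG
  have hmem : ∀ g ∈ (W \ M) ∩ Icc vh mhi, g ∈ W ∧ g ∉ M ∧ vh < g ∧ g < mhi :=
    fun g ⟨⟨hgW, hgM⟩, hg1, hg2⟩ => ⟨hgW, hgM, lt_of_le_of_ne hg1 fun h => hgM (h ▸ hvh.1),
      lt_of_le_of_ne hg2 fun h => hgM (h ▸ hhi.1)⟩
  have hvmG : vm ∈ (W \ M) ∩ Icc vh mhi := hGeq ▸ mem_insert _ _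
  obtain ⟨-, -, hvhvm, -⟩ := hmem vm hvmG
  obtain ⟨hvpW, hvpM, hvhvp, hvpmhi⟩ := hmem vp (hGeq ▸ mem_insert_of_mem _ (mem_insert _ _))
  obtain ⟨huW, huM, hvhu, humhi⟩ := hmem u (hGeq ▸ mem_insert_of_mem _ (mem_insert_of_mem _ rfl))
  have hX := hQ.sUnion_subset_Icc hXW hirr hM hvh hhi hvh.1 hvmG
  have hbelow : ∀ x ∈ M, x < vp → x = vh := fun x hx hxvp =>
    hQ.eq_of_pair_mem_of_lt_iff hM hvpW hvpM hvhvp.ne' hvh.1 (pair_comm vh vp ▸ hQ.pair_mem_right)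
      hx (iff_of_true hxvp hvhvp)
  have habove : ∀ x ∈ M, u < x → x = mhi := fun x hx hux =>
    hQ.eq_of_pair_mem_of_lt_iff hM huW huM hvhu.ne' hhi.1 (pair_comm mhi u ▸ hu) hx
      (iff_of_false hux.not_gt humhi.not_gt)
  rcases hup.lt_or_gt with hup | hpu
  · have hWsub : W ⊆ {vh, mhi, vm, vp, u} := by
      intro w hw
      by_cases hwM : w ∈ M
      · rcases lt_or_ge w vp with h | h
        · exact Or.inl (hbelow w hwM h)
        · exact Or.inr (Or.inl (habove w hwM (hup.trans_le h)))
      · exact Or.inr (Or.inr (hGeq ▸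
          ⟨⟨hw, hwM⟩, Icc_subset_Icc (hX hbot).1 (hX htop).2 (hW hw)⟩))
    have := (ncard_le_ncard hWsub).trans (ncard_insert_le _ _)
    have := ncard_insert_le mhi {vm, vp, u}
    have := ncard_insert_le vm {vp, u}
    have := ncard_insert_le vp {u}
    rw [ncard_singleton] at this
    omega
  · obtain ⟨v, hvX, ⟨hvhv, hvvp⟩, hvvm⟩ := hQ.exists_mem_Ioo_of_irreducibleOn hirr hvhvm hmp
      (fun x hx => (hX hx).1) ⟨_, hu, mem_insert _ _⟩ hvpmhi
    by_cases hvM : v ∈ M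
    · exact hvhv.ne' (hbelow v hvM hvvp)
    · have hvG : v ∈ (W \ M) ∩ Icc vh mhi := ⟨⟨hXW hvX, hvM⟩, hX hvX⟩
      rw [hGeq] at hvG
      rcases hvG with h | h | h
      exacts [hvvm h, hvvp.ne h, (hpu.trans (h ▸ hvvp)).false]

theorem IsQuasiPairingAt.false_of_isGreatest_of_two_lt_ncard (hQ : IsQuasiPairingAt Q vh vm vp)
    (hmp : vm < vp) (hXW : ⋃₀ Q ⊆ W) (hirr : IrreducibleOn (⋃₀ Q) (QPart Q vh vm vp))
    (hbot : a ∈ ⋃₀ Q) (htop : b ∈ ⋃₀ Q) (hW : W ⊆ Icc a b) (hcard : 5 < W.ncard)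
    {mlo : α} (hM : IsModuleOn Q W M) (hlo : IsLeast M mlo) (hvh : IsGreatest M vh)
    (hG : 2 < ((W \ M) ∩ Icc mlo vh).ncard) : False := by
  refine hQ.swap.false_of_isLeast_of_two_lt_ncard (α := αᵒᵈ) hmp hXW ?_ htop hbot
    (fun w hw => ⟨(hW hw).2, (hW hw).1⟩) hcard (isModuleOn_toDual.2 hM) hvh.dual hlo.dual ?_
  · have h := irreducibleOn_toDual.2 (qPart_comm Q vh vm vp ▸ hirr)
    exact h
  · have h : ((W \ M : Set αᵒᵈ) ∩ Icc (α := αᵒᵈ) vh mlo) = (W \ M) ∩ Icc mlo vh :=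
      Set.ext fun _ => and_congr_right' and_comm
    exact h ▸ hG

end Core

/-- equation (6) of the paper. Let `n ≥ 6`, `V = {0, …, n−1}`, `Q` a
partial quasi-pairing of `V` with distinguished data `(vh, vm, vp)` such that `⋃₀ Q` is a
transversal of `mc(underline(n))` and `Q` is irreducible, and let `M` be a nontrivial
module of `T := Inv(underline(n), Q)` with minimum `mlo` and maximum `mhi`. Then at most
`2` elements of `V ∖ M` lie in the closed interval `[mlo, mhi]`. -/
theorem stmt_10 (n : ℕ) (hn : 6 ≤ n) (Q : Set (Set ℕ))
    (hQ : IsPartialQuasiPairingOn (Set.Iio n) Q)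
    (vh vm vp : ℕ) (hdata : QPData Q vh vm vp)
    (htrans : TransversalOf (⋃₀ Q) (mcOn (Set.Iio n)))
    (hirr : IrreducibleOn (⋃₀ Q) (QPart Q vh vm vp))
    (M : Set ℕ) (hM : IsNontrivialModuleOn Q (Set.Iio n) M)
    (mlo mhi : ℕ) (hlo : IsLeast M mlo) (hhi : IsGreatest M mhi) :
    ((Set.Iio n \ M) ∩ Set.Icc mlo mhi).ncard ≤ 2 := by
  have hQ' := hQ.isQuasiPairingAt hdata
  have hXW : ⋃₀ Q ⊆ Iio n := sUnion_subset fun B hB => (hQ.1 B hB).1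
  have hend : ∀ a, (a = 0 ∨ a = n - 1) → a ∈ ⋃₀ Q := by
    intro a ha
    have hext : (∀ w ∈ Iio n, a ≤ w) ∨ ∀ w ∈ Iio n, w ≤ a := by
      rcases ha with rfl | rfl
      exacts [Or.inl fun w _ => Nat.zero_le w, Or.inr fun w hw => Nat.le_sub_one_of_lt hw]
    obtain ⟨x, hx, rfl⟩ := htrans {a} (singleton_mem_mcOn (by rw [mem_Iio]; omega) hext
      ⟨1, ⟨(by omega : 1 < n), (by omega : 1 ≠ a)⟩, 2, ⟨(by omega : 2 < n), (by omega : 2 ≠ a)⟩,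
        by decide⟩)
    exact hx
  have hW : Iio n ⊆ Icc 0 (n - 1) := fun w hw => ⟨Nat.zero_le w, Nat.le_sub_one_of_lt hw⟩
  have hcard : 5 < (Iio n).ncard := by rw [ncard_Iio_nat]; omega
  by_contra! hG
  rcases hQ'.eq_or_eq_of_two_lt_ncard hM.1 hlo hhi hG with rfl | rfl
  · exact hQ'.false_of_isLeast_of_two_lt_ncard hdata.2.2 hXW hirr (hend 0 (Or.inl rfl))
      (hend _ (Or.inr rfl)) hW hcard hM.1 hlo hhi hG
  · exact hQ'.false_of_isGreatest_of_two_lt_ncard hdata.2.2 hXW hirr (hend 0 (Or.inl rfl))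
      (hend _ (Or.inr rfl)) hW hcard hM.1 hlo hhi hG
end

section
/- Let n ≥ 5, let V = {0,1,…,n−1} with the natural order, and let Q be a partial quasi-pairing of V. If there exists v ∈ V such that {v, v+2} ∈ Q and {v+1, v+3} ∈ Q, and v̂_Q ∉ {v, v+3}, then {v, v+3} is a nontrivial module of Inv(underline(n), Q); in particular, Inv(underline(n), Q) is decomposable. -/
open Set

/-!
A quasi-pairing has `m + 1` two-element blocks covering `2m + 1` vertices, so no vertex other
than `v̂_Q` lies in two blocks: a second such vertex would leave at most `2m` vertices covered.
Hence, when `v̂_Q ∉ {v, v + 3}`, the only reversed arcs at `v` and `v + 3` are those of the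
blocks `{v, v + 2}` and `{v + 1, v + 3}`. Vertices below `v` or above `v + 3` are then untouched,
`v + 1` is dominated by both `v` and `v + 3`, and `v + 2` dominates both, so `{v, v + 3}` is a
module.
-/

namespace Set

variable {α : Type*}

theorem ncard_sUnion_le_mul {Q : Set (Set α)} (hQ : Q.Finite) {k : ℕ}
    (hk : ∀ B ∈ Q, B.ncard ≤ k) : (⋃₀ Q).ncard ≤ k * Q.ncard := by
  induction Q, hQ using Set.Finite.induction_on with
  | empty => simp
  | @insert B Q hBQ hQ ih =>
    rw [sUnion_insert, ncard_insert_of_notMem hBQ hQ, mul_add_one]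
    calc (B ∪ ⋃₀ Q).ncard ≤ B.ncard + (⋃₀ Q).ncard := ncard_union_le _ _
      _ ≤ k + k * Q.ncard := add_le_add (hk B (mem_insert _ _))
          (ih fun C hC => hk C (mem_insert_of_mem _ hC))
      _ = k * Q.ncard + k := add_comm _ _

theorem sUnion_eq_diff_singleton_union {Q : Set (Set α)} {B : Set α} (hB : B ∈ Q) {x : α}
    (hx : x ∈ ⋃₀ (Q \ {B})) : ⋃₀ Q = (B \ {x}) ∪ ⋃₀ (Q \ {B}) := by
  conv_lhs => rw [← insert_eq_of_mem hB, ← insert_sdiff_singleton, sUnion_insert]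
  ext y
  rcases eq_or_ne y x with rfl | hyx <;> simp [*]

theorem eq_pair_of_ncard_eq_two {B : Set α} (hB : B.ncard = 2) {x y : α} (hxy : x ≠ y)
    (hx : x ∈ B) (hy : y ∈ B) : B = {x, y} :=
  (eq_of_subset_of_ncard_le (insert_subset hx (singleton_subset_iff.2 hy))
    (by rw [hB, ncard_pair hxy]) (finite_of_ncard_ne_zero (by omega))).symm

theorem ncard_sUnion_add_two_le_of_mem_sUnion_diff {Q : Set (Set α)} (hQ : Q.Finite)
    (hc : ∀ B ∈ Q, B.ncard = 2) {B D : Set α} (hB : B ∈ Q) (hD : D ∈ Q) (hBD : B ≠ D)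
    {x y : α} (hxB : x ∈ B) (hx : x ∈ ⋃₀ (Q \ {B})) (hyD : y ∈ D)
    (hy : y ∈ ⋃₀ ((Q \ {B}) \ {D})) : (⋃₀ Q).ncard + 2 ≤ 2 * Q.ncard := by
  have hD' : D ∈ Q \ {B} := ⟨hD, hBD.symm⟩
  have hB1 : (B \ {x}).ncard = 1 := by rw [ncard_sdiff_singleton_of_mem hxB, hc B hB]
  have hD1 : (D \ {y}).ncard = 1 := by rw [ncard_sdiff_singleton_of_mem hyD, hc D hD]
  have hrest : (⋃₀ ((Q \ {B}) \ {D})).ncard ≤ 2 * ((Q \ {B}) \ {D}).ncard :=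
    ncard_sUnion_le_mul (hQ.sdiff.sdiff) fun C hC => (hc C hC.1.1).le
  rw [ncard_sdiff_singleton_of_mem hD', ncard_sdiff_singleton_of_mem hB] at hrest
  have hQ2 : 2 ≤ Q.ncard := by
    simpa using (ncard_le_ncard (pair_subset hB hD) hQ).trans' (ncard_pair hBD).ge
  calc (⋃₀ Q).ncard + 2
      = ((B \ {x}) ∪ ((D \ {y}) ∪ ⋃₀ ((Q \ {B}) \ {D}))).ncard + 2 := by
        rw [sUnion_eq_diff_singleton_union hB hx, sUnion_eq_diff_singleton_union hD' hy]
    _ ≤ 1 + (1 + (⋃₀ ((Q \ {B}) \ {D})).ncard) + 2 := by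
        grw [ncard_union_le, ncard_union_le, hB1, hD1]
    _ ≤ 2 * Q.ncard := by omega

end Set

namespace IsPartialQuasiPairingOn

variable {α : Type*} {V : Set α} {Q : Set (Set α)}

theorem ne_of_pair_mem (hQ : IsPartialQuasiPairingOn V Q) {a b : α} (h : {a, b} ∈ Q) :
    a ≠ b := by
  rintro rfl
  simpa using (hQ.1 _ h).2

theorem eq_of_mem_two_blocks (hQ : IsPartialQuasiPairingOn V Q) {x y : α} {B C D E : Set α}
    (hB : B ∈ Q) (hC : C ∈ Q) (hBC : B ≠ C) (hxB : x ∈ B) (hxC : x ∈ C)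
    (hD : D ∈ Q) (hE : E ∈ Q) (hDE : D ≠ E) (hyD : y ∈ D) (hyE : y ∈ E) : x = y := by
  obtain ⟨hblocks, m, hm, hU, hQm⟩ := hQ
  have hc : ∀ B ∈ Q, B.ncard = 2 := fun B hB => (hblocks B hB).2
  by_contra hxy
  obtain ⟨B', hB', C', hC', hB'C', hxB', hxC', hyB'⟩ :
      ∃ B' ∈ Q, ∃ C' ∈ Q, B' ≠ C' ∧ x ∈ B' ∧ x ∈ C' ∧ y ∉ B' := by
    by_cases hyB : y ∈ B
    · refine ⟨C, hC, B, hB, hBC.symm, hxC, hxB, fun hyC => hBC ?_⟩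
      rw [eq_pair_of_ncard_eq_two (hc B hB) hxy hxB hyB,
        eq_pair_of_ncard_eq_two (hc C hC) hxy hxC hyC]
    · exact ⟨B, hB, C, hC, hBC, hxB, hxC, hyB⟩
  have hB'D : B' ≠ D := fun h => hyB' (h ▸ hyD)
  have hEB' : E ≠ B' := fun h => hyB' (h ▸ hyE)
  have := ncard_sUnion_add_two_le_of_mem_sUnion_diff (finite_of_ncard_ne_zero (by omega)) hc
    hB' hD hB'D hxB' ⟨C', ⟨hC', hB'C'.symm⟩, hxC'⟩ hyD ⟨E, ⟨⟨hE, hEB'⟩, hDE.symm⟩, hyE⟩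
  omega

theorem eq_of_pair_mem [LinearOrder α] (hQ : IsPartialQuasiPairingOn V Q) {vh vm vp : α}
    (hd : QPData Q vh vm vp) {x a b : α} (hx : vh ≠ x) (ha : {a, x} ∈ Q) (hb : {x, b} ∈ Q) :
    a = b := by
  obtain ⟨hvm, hvp, hlt⟩ := hd
  have hne : ({vh, vm} : Set α) ≠ {vh, vp} := by
    intro h
    have : vp ∈ ({vh, vm} : Set α) := h ▸ by simp
    rcases this with rfl | rfl
    · exact hQ.ne_of_pair_mem hvp rfl
    · exact hlt.false
  have hab : ({a, x} : Set α) = {x, b} := by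
    by_contra h
    exact hx (hQ.eq_of_mem_two_blocks hvm hvp hne (by simp) (by simp) ha hb h (by simp) (by simp))
  have : a ∈ ({x, b} : Set α) := hab ▸ by simp
  rcases this with rfl | rfl
  · exact absurd rfl (hQ.ne_of_pair_mem ha)
  · rfl

end IsPartialQuasiPairingOn

theorem not_isTrivialSubset_pair {α : Type*} {W : Set α} {a b c : α} (hab : a ≠ b) (hc : c ∈ W)
    (hca : c ≠ a) (hcb : c ≠ b) : ¬ IsTrivialSubset W {a, b} := by
  rintro (h | ⟨d, h⟩ | h)
  · exact (insert_nonempty a {b}).ne_empty h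
  · simpa [ncard_pair hab] using congrArg ncard h
  · rw [← h] at hc
    rcases hc with rfl | rfl <;> contradiction

theorem isModuleOn_pair_add_three {P : Set (Set ℕ)} {W : Set ℕ} {v : ℕ} (hW : {v, v + 3} ⊆ W)
    (h1 : {v, v + 2} ∈ P) (h2 : {v + 1, v + 3} ∈ P)
    (hv : ∀ w, {w, v} ∈ P → w = v + 2) (hv3 : ∀ w, {w, v + 3} ∈ P → w = v + 1) :
    IsModuleOn P W {v, v + 3} := by
  refine ⟨hW, fun w _ hw => ?_⟩
  simp only [mem_insert_iff, mem_singleton_iff, not_or] at hw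
  have hv' : ∀ w, {v, w} ∈ P → w = v + 2 := fun w h => hv w (pair_comm v w ▸ h)
  have hv3' : ∀ w, {v + 3, w} ∈ P → w = v + 1 := fun w h => hv3 w (pair_comm _ w ▸ h)
  simp only [forall_mem_insert, mem_singleton_iff, forall_eq]
  rcases (by omega : w < v ∨ w = v + 1 ∨ w = v + 2 ∨ v + 3 < w) with h | rfl | rfl | h
  · exact .inl ⟨.inl ⟨h, fun h' => absurd (hv w h') (by omega)⟩,
      .inl ⟨by omega, fun h' => absurd (hv3 w h') (by omega)⟩⟩
  · exact .inr ⟨.inl ⟨by omega, fun h' => absurd (hv' _ h') (by omega)⟩,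
      .inr ⟨by omega, pair_comm _ _ ▸ h2⟩⟩
  · exact .inl ⟨.inr ⟨by omega, pair_comm _ _ ▸ h1⟩,
      .inl ⟨by omega, fun h' => absurd (hv3 _ h') (by omega)⟩⟩
  · exact .inr ⟨.inl ⟨by omega, fun h' => absurd (hv' w h') (by omega)⟩,
      .inl ⟨by omega, fun h' => absurd (hv3' w h') (by omega)⟩⟩

theorem stmt_15_general (n : ℕ) (Q : Set (Set ℕ))
    (hQ : IsPartialQuasiPairingOn (Set.Iio n) Q)
    (vh vm vp : ℕ) (hdata : QPData Q vh vm vp)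
    (v : ℕ) (h1 : ({v, v + 2} : Set ℕ) ∈ Q)
    (h2 : ({v + 1, v + 3} : Set ℕ) ∈ Q) (h3 : vh ≠ v ∧ vh ≠ v + 3) :
    IsNontrivialModuleOn Q (Set.Iio n) {v, v + 3} ∧ DecomposableOn Q (Set.Iio n) := by
  have hv3 : v + 3 < n := (hQ.1 _ h2).1 (by simp)
  have hmod : IsNontrivialModuleOn Q (Set.Iio n) {v, v + 3} :=
    ⟨isModuleOn_pair_add_three (pair_subset (show v < n by omega) hv3) h1 h2
      (fun _ hw => hQ.eq_of_pair_mem hdata h3.1 hw h1)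
      (fun _ hw => hQ.eq_of_pair_mem hdata h3.2 hw (pair_comm _ _ ▸ h2)),
    not_isTrivialSubset_pair (c := v + 1) (by omega) (show v + 1 < n by omega)
      (by omega) (by omega)⟩
  exact ⟨hmod, _, hmod⟩

/-- Let `n ≥ 5`, `V = {0, …, n−1}`, and `Q` a partial quasi-pairing of
`V` with distinguished data `(vh, vm, vp)`. If there is `v ∈ V` with `{v, v+2} ∈ Q`,
`{v+1, v+3} ∈ Q`, and `v̂_Q ∉ {v, v+3}`, then `{v, v+3}` is a nontrivial module of
`Inv(underline(n), Q)`; in particular, `Inv(underline(n), Q)` is decomposable. -/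
theorem stmt_15 (n : ℕ) (hn : 5 ≤ n) (Q : Set (Set ℕ))
    (hQ : IsPartialQuasiPairingOn (Set.Iio n) Q)
    (vh vm vp : ℕ) (hdata : QPData Q vh vm vp)
    (v : ℕ) (hv : v < n) (h1 : ({v, v + 2} : Set ℕ) ∈ Q)
    (h2 : ({v + 1, v + 3} : Set ℕ) ∈ Q) (h3 : vh ≠ v ∧ vh ≠ v + 3) :
    IsNontrivialModuleOn Q (Set.Iio n) {v, v + 3} ∧ DecomposableOn Q (Set.Iio n) :=
  stmt_15_general n Q hQ vh vm vp hdata v h1 h2 h3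
end
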